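/- arXiv:2212.12756 — 3 statements merged into one kernel-verified Lean document; each statement's English description precedes it below -/
import Mathlib

section
/- (Observation 2) Let f be a Boolean network on n+2 components with f_{n+1}(x) = φ(x restricted to the first n coordinates) ∧ ¬ x_{n+2} and f_{n+2}(x) = x_{n+1} ∧ ¬ x_{n+2}, for some Boolean function φ : B^n → B. If a trap space T of f contains a configuration z with φ(z restricted to the first n coordinates) = true, then the last two coordinates of T are free: T (n+1) = none and T (n+2) = none (indices written 1-based as n+1, n+2). -/
/-!
A fixed coordinate of a trap space is constant on it, so it suffices to exhibit two points of
`vset T` that differ in coordinate `i₁`, and two that differ in `i₂`. Switching `i₂` off (possible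
because `f` itself switches it off when it is on) gives `x ∈ vset T` with `x i₂ = false` and
`φ` still true. Then `f x i₁ = true`, hence `f (f x) i₂ = ! f x i₂`; and if also `x i₁ = true`,
then `f x i₂ = true`, hence `f (f x) i₁ = false`. This is the cycle `00 → 10 → 11 → 01` of the
pair `(x i₁, x i₂)`.
-/

def vset {n : ℕ} (h : Fin n → Option Bool) : Set (Fin n → Bool) :=
  { x | ∀ i b, h i = some b → x i = b }

def IsTrap {n : ℕ} (f : (Fin n → Bool) → (Fin n → Bool)) (h : Fin n → Option Bool) : Prop :=
  ∀ x ∈ vset h, f x ∈ vset h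

def IsMinTrap {n : ℕ} (f : (Fin n → Bool) → (Fin n → Bool)) (h : Fin n → Option Bool) : Prop :=
  IsTrap f h ∧ ∀ h' : Fin n → Option Bool, IsTrap f h' → ¬ (vset h' ⊂ vset h)

theorem eq_none_of_mem_vset_of_ne {n : ℕ} {h : Fin n → Option Bool} {x y : Fin n → Bool}
    (hx : x ∈ vset h) (hy : y ∈ vset h) {i : Fin n} (hxy : x i ≠ y i) : h i = none := by
  cases hi : h i with
  | none => rfl
  | some b => exact absurd ((hx i b hi).trans (hy i b hi).symm) hxy

theorem update_mem_vset {n : ℕ} {h : Fin n → Option Bool} {x : Fin n → Bool} (hx : x ∈ vset h)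
    {i : Fin n} (hi : h i = none) (b : Bool) : Function.update x i b ∈ vset h := by
  intro j c hj
  by_cases hji : j = i
  · subst hji
    simp [hi] at hj
  · rw [Function.update_of_ne hji]
    exact hx j c hj

theorem IsTrap.eq_none_of_apply_ne {n : ℕ} {f : (Fin n → Bool) → (Fin n → Bool)}
    {h : Fin n → Option Bool} (hT : IsTrap f h) {x : Fin n → Bool} (hx : x ∈ vset h) {i : Fin n}
    (hfx : f x i ≠ x i) : h i = none :=
  eq_none_of_mem_vset_of_ne (hT x hx) hx hfx

theorem castAdd_comp_update_of_le {n m : ℕ} {α : Type*} (x : Fin (n + m) → α) {j : Fin (n + m)}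
    (hj : n ≤ j) (b : α) :
    (fun i : Fin n => Function.update x j b (Fin.castAdd m i)) = fun i => x (Fin.castAdd m i) := by
  funext i
  have hij : Fin.castAdd m i ≠ j := Fin.ne_of_val_ne (by rw [Fin.val_castAdd]; omega)
  exact Function.update_of_ne hij b x

section Oscillator

variable {n : ℕ} {f : (Fin (n+2) → Bool) → (Fin (n+2) → Bool)} {φ : (Fin n → Bool) → Bool}
  {i₁ i₂ : Fin (n+2)} {T : Fin (n+2) → Option Bool}

theorem exists_mem_vset_switch_off (hi₂ : (i₂ : ℕ) = n + 1)
    (hf₂ : ∀ x, f x i₂ = (x i₁ && ! x i₂)) (hT : IsTrap f T)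
    {z : Fin (n+2) → Bool} (hz : z ∈ vset T) (hφ : φ (fun i : Fin n => z (Fin.castAdd 2 i)) = true) :
    ∃ x ∈ vset T, φ (fun i : Fin n => x (Fin.castAdd 2 i)) = true ∧ x i₂ = false := by
  cases hz₂ : z i₂ with
  | false => exact ⟨z, hz, hφ, hz₂⟩
  | true =>
    have hfree : T i₂ = none := hT.eq_none_of_apply_ne hz (by simp [hf₂, hz₂])
    refine ⟨Function.update z i₂ false, update_mem_vset hz hfree false, ?_, by simp⟩
    rwa [castAdd_comp_update_of_le z (by omega)]

theorem free_of_mem_vset_switch_off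
    (hf₁ : ∀ x, f x i₁ = (φ (fun i : Fin n => x (Fin.castAdd 2 i)) && ! x i₂))
    (hf₂ : ∀ x, f x i₂ = (x i₁ && ! x i₂)) (hT : IsTrap f T)
    {x : Fin (n+2) → Bool} (hx : x ∈ vset T) (hφ : φ (fun i : Fin n => x (Fin.castAdd 2 i)) = true)
    (hx₂ : x i₂ = false) : T i₁ = none ∧ T i₂ = none := by
  have hfx : f x ∈ vset T := hT x hx
  have hfx₁ : f x i₁ = true := by simp [hf₁, hφ, hx₂]
  refine ⟨?_, hT.eq_none_of_apply_ne hfx (by simp [hf₂ (f x), hfx₁])⟩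
  cases hx₁ : x i₁ with
  | false => exact hT.eq_none_of_apply_ne hx (by simp [hfx₁, hx₁])
  | true =>
    have hfx₂ : f x i₂ = true := by simp [hf₂, hx₁, hx₂]
    exact hT.eq_none_of_apply_ne hfx (by simp [hf₁ (f x), hfx₁, hfx₂])

end Oscillator

theorem stmt_12_general {n : ℕ} (f : (Fin (n+2) → Bool) → (Fin (n+2) → Bool))
    (φ : (Fin n → Bool) → Bool)
    (i₁ : Fin (n+2)) (i₂ : Fin (n+2)) (hi₂ : (i₂ : ℕ) = n + 1)
    (hf₁ : ∀ x, f x i₁ = (φ (fun i : Fin n => x (Fin.castAdd 2 i)) && ! x i₂))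
    (hf₂ : ∀ x, f x i₂ = (x i₁ && ! x i₂))
    (T : Fin (n+2) → Option Bool) (hT : IsTrap f T)
    (z : Fin (n+2) → Bool) (hz : z ∈ vset T)
    (hφ : φ (fun i : Fin n => z (Fin.castAdd 2 i)) = true) :
    T i₁ = none ∧ T i₂ = none := by
  obtain ⟨x, hx, hφx, hx₂⟩ := exists_mem_vset_switch_off hi₂ hf₂ hT hz hφ
  exact free_of_mem_vset_switch_off hf₁ hf₂ hT hx hφx hx₂

theorem stmt_12 {n : ℕ} (f : (Fin (n+2) → Bool) → (Fin (n+2) → Bool))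
    (φ : (Fin n → Bool) → Bool)
    (i₁ : Fin (n+2)) (i₂ : Fin (n+2)) (hi₁ : (i₁ : ℕ) = n) (hi₂ : (i₂ : ℕ) = n + 1)
    (hf₁ : ∀ x, f x i₁ = (φ (fun i : Fin n => x (Fin.castAdd 2 i)) && ! x i₂))
    (hf₂ : ∀ x, f x i₂ = (x i₁ && ! x i₂))
    (T : Fin (n+2) → Option Bool) (hT : IsTrap f T)
    (z : Fin (n+2) → Bool) (hz : z ∈ vset T)
    (hφ : φ (fun i : Fin n => z (Fin.castAdd 2 i)) = true) :
    T i₁ = none ∧ T i₂ = none :=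
  stmt_12_general f φ i₁ i₂ hi₂ hf₁ hf₂ T hT z hz hφ
end

section
/- (Direction of Theorem 1 reduction) Let φ : B^{n} → B and define the Boolean network f on n+1 components by f_i(x) = ¬ x_i for i ≤ n and f_{n+1}(x) = φ(x restricted to first n coordinates). Let h be the sub-hypercube with the first n coordinates free and the last coordinate fixed to true. Then h is a trap space of f if and only if φ is a tautology (φ y = true for all y : Fin n → Bool). -/
section SingleFixedCoordinate

variable {n : ℕ} (j : Fin n) (b : Bool)

theorem mem_vset_fixing_iff (x : Fin n → Bool) :
    x ∈ vset (fun i => if i = j then some b else none) ↔ x j = b := by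
  constructor
  · intro hx
    exact hx j b (if_pos rfl)
  · rintro hxj i c hi
    dsimp only at hi
    split_ifs at hi with hij
    cases hij
    cases hi
    exact hxj

theorem isTrap_fixing_iff (f : (Fin n → Bool) → (Fin n → Bool)) :
    IsTrap f (fun i => if i = j then some b else none) ↔ ∀ x, x j = b → f x j = b := by
  simp only [IsTrap, mem_vset_fixing_iff]

end SingleFixedCoordinate

theorem stmt_16_general {n : ℕ} (f : (Fin (n+1) → Bool) → (Fin (n+1) → Bool))
    (φ : (Fin n → Bool) → Bool)
    (hf₂ : ∀ x : Fin (n+1) → Bool,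
      f x (Fin.last n) = φ (fun i : Fin n => x (Fin.castSucc i))) :
    IsTrap f (fun i => if i = Fin.last n then some true else none) ↔
      ∀ y : Fin n → Bool, φ y = true := by
  rw [isTrap_fixing_iff]
  simp only [hf₂]
  constructor
  · intro hφ y
    simpa only [Fin.snoc_castSucc] using hφ (Fin.snoc y true) (Fin.snoc_last _ _)
  · intro hφ x _
    exact hφ _

theorem stmt_16 {n : ℕ} (f : (Fin (n+1) → Bool) → (Fin (n+1) → Bool))
    (φ : (Fin n → Bool) → Bool)
    (hf₁ : ∀ (i : Fin n) (x : Fin (n+1) → Bool),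
      f x (Fin.castSucc i) = ! x (Fin.castSucc i))
    (hf₂ : ∀ x : Fin (n+1) → Bool,
      f x (Fin.last n) = φ (fun i : Fin n => x (Fin.castSucc i))) :
    IsTrap f (fun i => if i = Fin.last n then some true else none) ↔
      ∀ y : Fin n → Bool, φ y = true :=
  stmt_16_general f φ hf₂
end

section
/- (Lemma 1, forward direction, specialized) Let φ : B^{n₂} → B and n₁ ≤ n₂. Define the Boolean network f on n₂+2 components by: f_j(x) = (x_j ∧ ¬ x_{n₂+1}) ∨ x_{n₂+2} for j ≤ n₁; f_j(x) = ¬ x_j for n₁ < j ≤ n₂; f_{n₂+1}(x) = φ(x restricted to first n₂ coordinates) ∧ ¬ x_{n₂+2}; f_{n₂+2}(x) = x_{n₂+1} ∧ ¬ x_{n₂+2}. If for all assignments of the first n₁ variables there exist values of the remaining n₂ − n₁ variables making φ true, then the only trap space of f is the fully free sub-hypercube (every coordinate none). -/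
section TrapSpace

variable {n : ℕ} {f : (Fin n → Bool) → (Fin n → Bool)} {h : Fin n → Option Bool}

def fillFree (h : Fin n → Option Bool) (g : Fin n → Bool) : Fin n → Bool :=
  fun i => (h i).getD (g i)

lemma fillFree_mem_vset (h : Fin n → Option Bool) (g : Fin n → Bool) : fillFree h g ∈ vset h := by
  intro i b hb
  simp [fillFree, hb]

lemma fillFree_const_apply_of_ne_some {b : Bool} {i : Fin n} (hi : h i ≠ some (!b)) :
    fillFree h (fun _ => b) i = b := by
  cases hh : h i with
  | none => simp [fillFree, hh]
  | some c => cases b <;> cases c <;> simp_all [fillFree]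

lemma eq_none_of_ne_some_false_of_ne_some_true {o : Option Bool} (hf : o ≠ some false)
    (ht : o ≠ some true) : o = none :=
  Option.eq_none_iff_forall_ne_some.2 (Bool.forall_bool.2 ⟨hf, ht⟩)

lemma IsTrap.eq_none_of_apply_eq_not (ht : IsTrap f h) {i : Fin n} (hneg : ∀ x, f x i = !x i) :
    h i = none := by
  refine Option.eq_none_iff_forall_ne_some.2 fun b hb => ?_
  have hx := fillFree_mem_vset h fun _ => b
  simpa [hneg, hx i b hb] using ht _ hx i b hb

lemma IsTrap.eq_none_of_switch (ht : IsTrap f h) {i₁ i₂ : Fin n} (ψ : (Fin n → Bool) → Bool)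
    (hf₁ : ∀ x, f x i₁ = (ψ x && !x i₂)) (hf₂ : ∀ x, f x i₂ = (x i₁ && !x i₂))
    (hψ : ∀ y ∈ vset h, ∃ x ∈ vset h, x i₂ = y i₂ ∧ ψ x = true) :
    h i₁ = none ∧ h i₂ = none := by
  have hxt := fillFree_mem_vset h fun _ => true
  have ne_true₂ : h i₂ ≠ some true := fun hb => by
    simpa [hf₂, hxt i₂ true hb] using ht _ hxt i₂ true hb
  have ne_false₁ : h i₁ ≠ some false := fun hb => by
    obtain ⟨x, hx, hx₂, hψx⟩ := hψ _ (fillFree_mem_vset h fun _ => false)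
    rw [fillFree_const_apply_of_ne_some ne_true₂] at hx₂
    simpa [hf₁, hψx, hx₂] using ht x hx i₁ false hb
  have ne_false₂ : h i₂ ≠ some false := fun hb => by
    simpa [hf₂, hxt i₂ false hb, fillFree_const_apply_of_ne_some (b := true) ne_false₁] using
      ht _ hxt i₂ false hb
  have none₂ := eq_none_of_ne_some_false_of_ne_some_true ne_false₂ ne_true₂
  refine ⟨eq_none_of_ne_some_false_of_ne_some_true ne_false₁ fun hb => ?_, none₂⟩
  simpa [hf₁, fillFree, none₂] using ht _ hxt i₁ true hb

lemma IsTrap.eq_none_of_latch (ht : IsTrap f h) {i₁ i₂ j : Fin n} (hne : i₁ ≠ i₂)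
    (none₁ : h i₁ = none) (none₂ : h i₂ = none) (hf : ∀ x, f x j = ((x j && !x i₁) || x i₂)) :
    h j = none := by
  refine eq_none_of_ne_some_false_of_ne_some_true (fun hb => ?_) (fun hb => ?_)
  · have hx := fillFree_mem_vset h fun _ => true
    simpa [hf, fillFree, none₂] using ht _ hx j false hb
  · have hx := fillFree_mem_vset h fun k => decide (k ≠ i₂)
    simpa [hf, hx j true hb, fillFree, none₁, none₂, hne] using ht _ hx j true hb

end TrapSpace

lemma exists_eq_on_lt_of_forall_exists {n₁ n₂ : ℕ} (hle : n₁ ≤ n₂) {φ : (Fin n₂ → Bool) → Bool}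
    (hsat : ∀ a : Fin n₁ → Bool, ∃ b : Fin (n₂ - n₁) → Bool,
      φ (fun i => if hi : (i : ℕ) < n₁ then a ⟨i, hi⟩
                  else b ⟨(i : ℕ) - n₁, by omega⟩) = true)
    (a : Fin n₂ → Bool) :
    ∃ z : Fin n₂ → Bool, (∀ j : Fin n₂, (j : ℕ) < n₁ → z j = a j) ∧ φ z = true := by
  obtain ⟨b, hb⟩ := hsat fun j => a (Fin.castLE hle j)
  exact ⟨_, fun j hj => by simp [hj], hb⟩

theorem stmt_17 {n₁ n₂ : ℕ} (hle : n₁ ≤ n₂)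
    (f : (Fin (n₂+2) → Bool) → (Fin (n₂+2) → Bool))
    (φ : (Fin n₂ → Bool) → Bool)
    (i₁ : Fin (n₂+2)) (i₂ : Fin (n₂+2)) (hi₁ : (i₁ : ℕ) = n₂) (hi₂ : (i₂ : ℕ) = n₂ + 1)
    (hfa : ∀ (j : Fin n₂), (j : ℕ) < n₁ → ∀ x,
      f x (Fin.castAdd 2 j) = ((x (Fin.castAdd 2 j) && ! x i₁) || x i₂))
    (hfb : ∀ (j : Fin n₂), n₁ ≤ (j : ℕ) → ∀ x,
      f x (Fin.castAdd 2 j) = ! x (Fin.castAdd 2 j))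
    (hf₁ : ∀ x, f x i₁ = (φ (fun i : Fin n₂ => x (Fin.castAdd 2 i)) && ! x i₂))
    (hf₂ : ∀ x, f x i₂ = (x i₁ && ! x i₂))
    (hsat : ∀ a : Fin n₁ → Bool, ∃ b : Fin (n₂ - n₁) → Bool,
      φ (fun i => if hi : (i : ℕ) < n₁ then a ⟨i, hi⟩
                  else b ⟨(i : ℕ) - n₁, by omega⟩) = true) :
    ∀ h : Fin (n₂+2) → Option Bool, IsTrap f h → ∀ i, h i = none := by
  intro h ht
  have free_block (j : Fin n₂) (hj : n₁ ≤ (j : ℕ)) : h (Fin.castAdd 2 j) = none :=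
    ht.eq_none_of_apply_eq_not (hfb j hj)
  have hi₂' : i₂ = Fin.natAdd n₂ 1 := Fin.ext (by simp [hi₂])
  have hψ (y) (hy : y ∈ vset h) : ∃ x ∈ vset h, x i₂ = y i₂ ∧
      φ (fun i : Fin n₂ => x (Fin.castAdd 2 i)) = true := by
    obtain ⟨z, hz, hφz⟩ := exists_eq_on_lt_of_forall_exists hle hsat fun j => y (Fin.castAdd 2 j)
    refine ⟨Fin.append z fun k => y (Fin.natAdd n₂ k), ?_, by simp [hi₂'], by simpa using hφz⟩
    intro i b hb
    induction i using Fin.addCases with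
    | left j =>
      rcases lt_or_ge (j : ℕ) n₁ with hj | hj
      · simpa [hz j hj] using hy _ b hb
      · simp [free_block j hj] at hb
    | right k => simpa using hy _ b hb
  obtain ⟨none₁, none₂⟩ := ht.eq_none_of_switch _ hf₁ hf₂ hψ
  have hne : i₁ ≠ i₂ := fun e => by rw [Fin.ext_iff] at e; omega
  intro i
  rcases lt_or_ge (i : ℕ) n₂ with hi | hi
  · rw [show i = Fin.castAdd 2 ⟨i, hi⟩ from rfl]
    rcases lt_or_ge (i : ℕ) n₁ with hj | hj
    · exact ht.eq_none_of_latch hne none₁ none₂ (hfa _ hj)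
    · exact free_block _ hj
  · obtain rfl | rfl : i = i₁ ∨ i = i₂ := by simp only [Fin.ext_iff]; omega
    exacts [none₁, none₂]
end
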